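/- Let T be a nonnegative random variable and N ≥ 3, n ≥ 1 with log N ≤ n. Suppose P(T ≥ √u) ≤ min(1, 2N exp(−3√u·√(log N)/(16√n))) for all u ≥ 36 n log N. Then E[T²] ≤ 36 n log N + 2⁸ n. -/

import Mathlib

/-!
By the layer-cake formula, `E[T²] = ∫₀^∞ P(T ≥ √u) du`. Bound the integrand by `1` on
`[0, b²]` with `b² = 36 n log N`, and by `2N e^{-a√u}` beyond, where `a = 3 √(log N) / (16 √n)`.
The tail integrates to `2N · 2(ab + 1) e^{-ab} / a²`, and since `ab = 9/8 log N` the factor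
`N = e^{log N}` is absorbed by `e^{-ab}`, leaving at most `2⁸ n`.
-/

open MeasureTheory Set Filter Topology Real

lemma tendsto_add_one_mul_exp_neg_atTop_nhds_zero :
    Tendsto (fun s : ℝ => (s + 1) * exp (-s)) atTop (𝓝 0) := by
  have h := (tendsto_pow_mul_exp_neg_atTop_nhds_zero 1).add tendsto_exp_neg_atTop_nhds_zero
  simpa [add_mul] using h

lemma integral_Ioi_sq_exp_neg_mul_sqrt {a b : ℝ} (ha : 0 < a) (hb : 0 ≤ b) :
    IntegrableOn (fun u => exp (-(a * √u))) (Ioi (b ^ 2)) ∧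
      ∫ u in Ioi (b ^ 2), exp (-(a * √u)) = 2 * (a * b + 1) * exp (-(a * b)) / a ^ 2 := by
  set G : ℝ → ℝ := fun u => -(2 / a ^ 2) * ((a * √u + 1) * exp (-(a * √u)))
  have hcont : ContinuousWithinAt G (Ici (b ^ 2)) (b ^ 2) := by
    apply Continuous.continuousWithinAt
    fun_prop
  have hderiv : ∀ u ∈ Ioi (b ^ 2), HasDerivAt G (exp (-(a * √u))) u := by
    intro u hu
    have hu0 : 0 < u := (sq_nonneg b).trans_lt hu
    have hs : HasDerivAt (fun u => a * √u) (a * (1 / (2 * √u))) u :=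
      (hasDerivAt_sqrt hu0.ne').const_mul a
    have hsu : √u ≠ 0 := (sqrt_pos.2 hu0).ne'
    refine (((hs.add_const 1).mul hs.neg.exp).const_mul (-(2 / a ^ 2))).congr_deriv ?_
    simp only [Pi.neg_apply]
    field_simp
    ring
  have hlim : Tendsto G atTop (𝓝 0) := by
    simpa [G] using (tendsto_add_one_mul_exp_neg_atTop_nhds_zero.comp
      ((tendsto_sqrt_atTop).const_mul_atTop ha)).const_mul (-(2 / a ^ 2))
  have hpos : ∀ u ∈ Ioi (b ^ 2), 0 ≤ exp (-(a * √u)) := fun u _ => (exp_pos _).le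
  refine ⟨integrableOn_Ioi_deriv_of_nonneg hcont hderiv hpos hlim, ?_⟩
  rw [integral_Ioi_of_hasDerivAt_of_nonneg hcont hderiv hpos hlim]
  simp only [G, sqrt_sq hb]
  ring

lemma lintegral_ofReal_le_add_setLIntegral_Ioi_meas_le {α : Type*} [MeasurableSpace α]
    {μ : Measure α} [IsZeroOrProbabilityMeasure μ] {f : α → ℝ} (hf : 0 ≤ᵐ[μ] f)
    (hfm : AEMeasurable f μ) {B : ℝ} (hB : 0 ≤ B) :
    ∫⁻ ω, ENNReal.ofReal (f ω) ∂μ ≤ ENNReal.ofReal B + ∫⁻ t in Ioi B, μ {ω | t ≤ f ω} := by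
  rw [lintegral_eq_lintegral_meas_le μ hf hfm, ← Ioc_union_Ioi_eq_Ioi hB,
    lintegral_union measurableSet_Ioi Ioc_disjoint_Ioi_same]
  gcongr
  calc ∫⁻ t in Ioc 0 B, μ {ω | t ≤ f ω} ≤ ∫⁻ _ in Ioc 0 B, 1 := lintegral_mono fun _ => prob_le_one
    _ = ENNReal.ofReal B := by rw [setLIntegral_one, Real.volume_Ioc, sub_zero]

lemma lintegral_sq_le_of_tail_le_exp {Ω : Type*} [MeasurableSpace Ω] {μ : Measure Ω}
    [IsZeroOrProbabilityMeasure μ] {T : Ω → ℝ} (hT : ∀ ω, 0 ≤ T ω) (hTm : AEMeasurable T μ)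
    {a b C : ℝ} (ha : 0 < a) (hb : 0 ≤ b) (hC : 0 ≤ C)
    (htail : ∀ u, b ^ 2 ≤ u → μ {ω | √u ≤ T ω} ≤ ENNReal.ofReal (C * exp (-(a * √u)))) :
    ∫⁻ ω, ENNReal.ofReal (T ω ^ 2) ∂μ ≤
      ENNReal.ofReal (b ^ 2 + C * (2 * (a * b + 1) * exp (-(a * b)) / a ^ 2)) := by
  obtain ⟨hint, hval⟩ := integral_Ioi_sq_exp_neg_mul_sqrt ha hb
  have hsq (u : ℝ) : {ω | u ≤ T ω ^ 2} = {ω | √u ≤ T ω} := by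
    ext ω
    exact (sqrt_le_left (hT ω)).symm
  calc ∫⁻ ω, ENNReal.ofReal (T ω ^ 2) ∂μ
      ≤ ENNReal.ofReal (b ^ 2) + ∫⁻ u in Ioi (b ^ 2), μ {ω | u ≤ T ω ^ 2} :=
        lintegral_ofReal_le_add_setLIntegral_Ioi_meas_le (ae_of_all _ fun ω => sq_nonneg (T ω))
          (hTm.pow_const 2) (sq_nonneg b)
    _ ≤ ENNReal.ofReal (b ^ 2) + ∫⁻ u in Ioi (b ^ 2), ENNReal.ofReal (C * exp (-(a * √u))) := by
        refine add_le_add_right (setLIntegral_mono' measurableSet_Ioi fun u (hu : b ^ 2 < u) => ?_) _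
        rw [hsq u]
        exact htail u hu.le
    _ = ENNReal.ofReal (b ^ 2 + C * (2 * (a * b + 1) * exp (-(a * b)) / a ^ 2)) := by
        rw [← ofReal_integral_eq_lintegral_ofReal (hint.const_mul C)
          (ae_of_all _ fun u => mul_nonneg hC (exp_pos _).le), integral_const_mul, hval,
          ENNReal.ofReal_add (sq_nonneg b) (by positivity)]

lemma two_mul_exp_mul_tail_le {L n : ℝ} (hL : 1 ≤ L) (hn : 0 < n) :
    2 * exp L * (2 * (9 / 8 * L + 1) * exp (-(9 / 8 * L)) / (9 * L / (256 * n))) ≤ 2 ^ 8 * n := by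
  have hexp : exp L * exp (-(9 / 8 * L)) ≤ 1 := by
    rw [← exp_add, exp_le_one_iff]
    linarith
  have hfrac : (9 / 8 * L + 1) / (9 * L) ≤ 17 / 72 := by
    rw [div_le_iff₀ (by positivity)]
    linarith
  calc 2 * exp L * (2 * (9 / 8 * L + 1) * exp (-(9 / 8 * L)) / (9 * L / (256 * n)))
      = 1024 * n * ((9 / 8 * L + 1) / (9 * L)) * (exp L * exp (-(9 / 8 * L))) := by
        field_simp
        ring
    _ ≤ 1024 * n * (17 / 72) * 1 := by gcongr
    _ ≤ 2 ^ 8 * n := by linarith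

lemma tail_parameters_sq_and_mul {L n : ℝ} (hL : 0 ≤ L) (hn : 0 < n) :
    (6 * √n * √L) ^ 2 = 36 * n * L ∧
      3 * √L / (16 * √n) * (6 * √n * √L) = 9 / 8 * L ∧
      (3 * √L / (16 * √n)) ^ 2 = 9 * L / (256 * n) := by
  have hsL : √L ^ 2 = L := sq_sqrt hL
  have hsn : √n ^ 2 = n := sq_sqrt hn.le
  have hsn0 : √n ≠ 0 := (sqrt_pos.2 hn).ne'
  refine ⟨?_, ?_, ?_⟩
  · rw [mul_pow, mul_pow, hsn, hsL]
    ring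
  · field_simp
    rw [hsL]
    ring
  · field_simp
    rw [hsL, hsn]
    ring

theorem stmt_6_general {Ω : Type*} [MeasurableSpace Ω] (μ : Measure Ω) [IsProbabilityMeasure μ]
    (T : Ω → ℝ) (hT : ∀ ω, 0 ≤ T ω) (hTmeas : Measurable T)
    (N n : ℝ) (hN : 3 ≤ N) (hn : 1 ≤ n)
    (htail : ∀ u : ℝ, 36 * n * Real.log N ≤ u →
      μ {ω | Real.sqrt u ≤ T ω} ≤ ENNReal.ofReal
        (min 1 (2 * N * Real.exp (-3 * Real.sqrt u * Real.sqrt (Real.log N) / (16 * Real.sqrt n))))) :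
    ∫⁻ ω, ENNReal.ofReal ((T ω) ^ 2) ∂μ ≤
      ENNReal.ofReal (36 * n * Real.log N + 2 ^ 8 * n) := by
  have hN0 : 0 < N := by linarith
  have hL : 1 ≤ log N := by
    rw [le_log_iff_exp_le hN0]
    linarith [exp_one_lt_three]
  have hn0 : 0 < n := by linarith
  obtain ⟨hb2, hab, ha2⟩ := tail_parameters_sq_and_mul (zero_le_one.trans hL) hn0
  have hmoment := lintegral_sq_le_of_tail_le_exp (a := 3 * √(log N) / (16 * √n))
    (b := 6 * √n * √(log N)) hT hTmeas.aemeasurable (by positivity) (by positivity)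
    (by positivity : 0 ≤ 2 * N) fun u hu =>
      (htail u (hb2 ▸ hu)).trans <| ENNReal.ofReal_le_ofReal <|
        (min_le_right _ _).trans_eq (by ring_nf)
  refine hmoment.trans (ENNReal.ofReal_le_ofReal ?_)
  have htail_mass := two_mul_exp_mul_tail_le hL hn0
  rw [exp_log hN0] at htail_mass
  rw [hb2, hab, ha2]
  linarith

theorem stmt_6 {Ω : Type*} [MeasurableSpace Ω] (μ : Measure Ω) [IsProbabilityMeasure μ]
    (T : Ω → ℝ) (hT : ∀ ω, 0 ≤ T ω) (hTmeas : Measurable T)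
    (N n : ℝ) (hN : 3 ≤ N) (hn : 1 ≤ n) (hlog : Real.log N ≤ n)
    (htail : ∀ u : ℝ, 36 * n * Real.log N ≤ u →
      μ {ω | Real.sqrt u ≤ T ω} ≤ ENNReal.ofReal
        (min 1 (2 * N * Real.exp (-3 * Real.sqrt u * Real.sqrt (Real.log N) / (16 * Real.sqrt n))))) :
    ∫⁻ ω, ENNReal.ofReal ((T ω) ^ 2) ∂μ ≤
      ENNReal.ofReal (36 * n * Real.log N + 2 ^ 8 * n) :=
  stmt_6_general μ T hT hTmeas N n hN hn htail
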